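/- arXiv:2311.05996 — 4 statements merged into one kernel-verified Lean document; each statement's English description precedes it below -/
import Mathlib

section
/- Let (X, D, CO) be a binary branching D-relation with a cyclic order CO that is convex for D. Suppose a, b, c, x ∈ X are all distinct, CO(a,b,c), and D(x,a;b,c). Then (D(x,a;b,c) ∧ CO(c,x,a)) ∨ (D(b,c;a,x) ∧ CO(a,x,b)). -/
section DRelation

variable {X : Type*} {D : X → X → X → X → Prop}

theorem not_D_rotate_of_D (d1 : ∀ x y z w, D x y z w → D y x z w ∧ D x y w z ∧ D z w x y)
    (d2 : ∀ x y z w, D x y z w → ¬ D x z y w) {x a b c : X} (h : D x a b c) :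
    ¬ D x b c a :=
  fun h' => d2 _ _ _ _ h (d1 _ _ _ _ h').2.1

theorem not_D_rotate_rotate_of_D (d1 : ∀ x y z w, D x y z w → D y x z w ∧ D x y w z ∧ D z w x y)
    (d2 : ∀ x y z w, D x y z w → ¬ D x z y w) {x a b c : X} (h : D x a b c) :
    ¬ D x c a b :=
  fun h' => d2 _ _ _ _ h' (d1 _ _ _ _ h).2.1

theorem not_D_swap_of_D (d1 : ∀ x y z w, D x y z w → D y x z w ∧ D x y w z ∧ D z w x y)
    (d2 : ∀ x y z w, D x y z w → ¬ D x z y w) {x a b c : X} (h : D x a b c) :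
    ¬ D c a b x :=
  fun h' => not_D_rotate_of_D d1 d2 h (d1 _ _ _ _ (d1 _ _ _ _ h').2.2).1

end DRelation

theorem CO_of_CO_of_CO {X : Type*} {CO : X → X → X → Prop}
    (co1 : ∀ x y z, CO x y z → CO y z x)
    (co3 : ∀ x y z w, CO x y z → CO x z w → CO x y w)
    {a b c x : X} (habx : CO a b x) (hbcx : CO b c x) : CO c x a :=
  co1 _ _ _ (co1 _ _ _ (co3 x a b c (co1 _ _ _ (co1 _ _ _ habx)) (co1 _ _ _ (co1 _ _ _ hbcx))))

theorem stmt3_general {X : Type*} (D : X → X → X → X → Prop) (CO : X → X → X → Prop)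
    (d1 : ∀ x y z w, D x y z w → D y x z w ∧ D x y w z ∧ D z w x y)
    (d2 : ∀ x y z w, D x y z w → ¬ D x z y w)
    (co1 : ∀ x y z, CO x y z → CO y z x)
    (co3 : ∀ x y z w, CO x y z → CO x z w → CO x y w)
    (co4 : ∀ x y z, x ≠ y → y ≠ z → x ≠ z → CO x y z ∨ CO x z y)
    (conv : ∀ x a b c, x ≠ a → x ≠ b → x ≠ c → a ≠ b → a ≠ c → b ≠ c →
      CO a b c → CO c x a → D x a b c ∨ D a b c x)
    (a b c x : X)
    (hab : a ≠ b) (hac : a ≠ c) (hax : a ≠ x)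
    (hbc : b ≠ c) (hbx : b ≠ x) (hcx : c ≠ x)
    (hco : CO a b c) (hD : D x a b c) :
    (D x a b c ∧ CO c x a) ∨ (D b c a x ∧ CO a x b) := by
  have hbca : CO b c a := co1 _ _ _ hco
  rcases co4 a x b hax hbx.symm hab with haxb | habx
  · refine .inr ⟨?_, haxb⟩
    exact (conv x b c a hbx.symm hcx.symm hax.symm hbc hab.symm hac.symm hbca haxb).resolve_left
      (not_D_rotate_of_D d1 d2 hD)
  · -- Convexity at x between b and c would force D(x,c;a,b) or D(c,a;b,x), both excluded by hD.
    have hbcx : CO b c x := by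
      refine (co4 b x c hbx hcx.symm hbc).resolve_left fun hbxc => ?_
      rcases conv x c a b hcx.symm hax.symm hbx.symm hac.symm hbc.symm hab (co1 _ _ _ hbca) hbxc
        with h | h
      · exact not_D_rotate_rotate_of_D d1 d2 hD h
      · exact not_D_swap_of_D d1 d2 hD h
    exact .inl ⟨hD, CO_of_CO_of_CO co1 co3 habx hbcx⟩

/-- In a binary branching D-relation with a convex cyclic order,
if a, b, c, x are all distinct, CO(a,b,c) and D(x,a;b,c), then
(D(x,a;b,c) ∧ CO(c,x,a)) ∨ (D(b,c;a,x) ∧ CO(a,x,b)). -/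
theorem stmt3 {X : Type*} (D : X → X → X → X → Prop) (CO : X → X → X → Prop)
    (d1 : ∀ x y z w, D x y z w → D y x z w ∧ D x y w z ∧ D z w x y)
    (d2 : ∀ x y z w, D x y z w → ¬ D x z y w)
    (d3 : ∀ x y z w a, D x y z w → D a y z w ∨ D x y z a)
    (d4 : ∀ x y z, x ≠ z → y ≠ z → D x y z z)
    (dbb : ∀ x y z w,
      ((x ≠ y ∧ x ≠ z ∧ y ≠ z) ∨ (x ≠ y ∧ x ≠ w ∧ y ≠ w) ∨
       (x ≠ z ∧ x ≠ w ∧ z ≠ w) ∨ (y ≠ z ∧ y ≠ w ∧ z ≠ w)) →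
      D x y z w ∨ D x z y w ∨ D x w y z)
    (co1 : ∀ x y z, CO x y z → CO y z x)
    (co2 : ∀ x y z, CO x y z → ¬ CO x z y)
    (co3 : ∀ x y z w, CO x y z → CO x z w → CO x y w)
    (co4 : ∀ x y z, x ≠ y → y ≠ z → x ≠ z → CO x y z ∨ CO x z y)
    (conv : ∀ x a b c, x ≠ a → x ≠ b → x ≠ c → a ≠ b → a ≠ c → b ≠ c →
      CO a b c → CO c x a → D x a b c ∨ D a b c x)
    (a b c x : X)
    (hab : a ≠ b) (hac : a ≠ c) (hax : a ≠ x)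
    (hbc : b ≠ c) (hbx : b ≠ x) (hcx : c ≠ x)
    (hco : CO a b c) (hD : D x a b c) :
    (D x a b c ∧ CO c x a) ∨ (D b c a x ∧ CO a x b) :=
  stmt3_general D CO d1 d2 co1 co3 co4 conv a b c x hab hac hax hbc hbx hcx hco hD
end

section
/- Given a D-relation D on a set X and a fixed point a ∈ X, the ternary relation C₀ on X \ {a} defined by C₀(x;y,z) ⟺ D(a,x;y,z) is a C-relation on X \ {a}. -/
/-- Axiom (c3) for `C₀(x; y, z) := D(a, x; y, z)`: apply (d3) to the pair-swapped quadruple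
`D(y, z; a, x)`, replacing its last point by `w`. -/
theorem D_or_D_of_D {X : Type*} {D : X → X → X → X → Prop}
    (swap : ∀ x y z w, D x y z w → D z w x y)
    (d3 : ∀ x y z w e, D x y z w → D e y z w ∨ D x y z e)
    {a x y z : X} (w : X) (h : D a x y z) : D a x w z ∨ D a w y z :=
  (d3 _ _ _ _ w (swap _ _ _ _ h)).imp (swap _ _ _ _) (swap _ _ _ _)

/-- Given a D-relation D on X and a fixed point a ∈ X, the ternary
relation C₀ on X \ {a} defined by C₀(x;y,z) ⟺ D(a,x;y,z) is a C-relation. -/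
theorem stmt4 {X : Type*} (D : X → X → X → X → Prop) (a : X)
    (d1 : ∀ x y z w, D x y z w → D y x z w ∧ D x y w z ∧ D z w x y)
    (d2 : ∀ x y z w, D x y z w → ¬ D x z y w)
    (d3 : ∀ x y z w e, D x y z w → D e y z w ∨ D x y z e)
    (d4 : ∀ x y z, x ≠ z → y ≠ z → D x y z z) :
    (∀ p q r : {x : X // x ≠ a}, D a p.1 q.1 r.1 → D a p.1 r.1 q.1) ∧
    (∀ p q r : {x : X // x ≠ a}, D a p.1 q.1 r.1 → ¬ D a q.1 p.1 r.1) ∧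
    (∀ p q r s : {x : X // x ≠ a}, D a p.1 q.1 r.1 → D a p.1 s.1 r.1 ∨ D a s.1 q.1 r.1) ∧
    (∀ p q : {x : X // x ≠ a}, p ≠ q → D a p.1 q.1 q.1) :=
  ⟨fun _ _ _ h => (d1 _ _ _ _ h).2.1,
    fun _ _ _ h => d2 _ _ _ _ h,
    fun _ _ _ s h => D_or_D_of_D (fun _ _ _ _ h => (d1 _ _ _ _ h).2.2) d3 s.1 h,
    fun _ q hpq => d4 _ _ _ q.2.symm (Subtype.coe_injective.ne hpq)⟩
end

section
/- Let (X, D, <) be a D-relation with a convex total order, and define C(x;y,z) to hold iff for every a ∈ X there exists b ≤ a with D(b,x;y,z). Then C satisfies axiom (c2) of C-relations: C(x;y,z) → ¬C(y;x,z). -/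
/-!
If `C(x;y,z)` and `C(y;x,z)` both held, pick witnesses `b₃ ≤ b₂ ≤ b₁ ≤ min x y` alternately
from the two relations. By (d2) and (d3), two consecutive witnesses `b' ≤ b` with `D(b,x;y,z)`
and `D(b',y;x,z)` give `D(b',y;b,x)`, and convexity then forces `x < y`, since `b < y`.
Applying this to `(b₁, b₂)` and, with `x` and `y` exchanged, to `(b₂, b₃)` gives `x < y < x`.
-/

namespace DRelation

variable {X : Type*} {D : X → X → X → X → Prop}

theorem D_of_D_of_D_swap
    (d2 : ∀ x y z w, D x y z w → ¬ D x z y w)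
    (d3 : ∀ x y z w a, D x y z w → D a y z w ∨ D x y z a)
    {b b' x y z : X} (h : D b x y z) (h' : D b' y x z) : D b x y b' :=
  (d3 b x y z b' h).resolve_left fun h'' => d2 _ _ _ _ h'' h'

theorem lt_of_D_of_le [LinearOrder X]
    (conv : ∀ x y z w, x ≤ y → x ≤ z → D x y z w →
      (x < z ∧ x < w ∧ y < z ∧ y < w) ∨ (x < z ∧ x < w ∧ z < y ∧ w < y))
    {b x y z : X} (hbx : b ≤ x) (hby : b ≤ y) (h : D b x y z) : b < y := by
  rcases conv b x y z hbx hby h with ⟨hlt, -⟩ | ⟨hlt, -⟩ <;> exact hlt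

theorem lt_of_D_of_D_swap [LinearOrder X]
    (d1 : ∀ x y z w, D x y z w → D y x z w ∧ D x y w z ∧ D z w x y)
    (d2 : ∀ x y z w, D x y z w → ¬ D x z y w)
    (d3 : ∀ x y z w a, D x y z w → D a y z w ∨ D x y z a)
    (conv : ∀ x y z w, x ≤ y → x ≤ z → D x y z w →
      (x < z ∧ x < w ∧ y < z ∧ y < w) ∨ (x < z ∧ x < w ∧ z < y ∧ w < y))
    {b b' x y z : X} (hbx : b ≤ x) (hby : b ≤ y) (hb' : b' ≤ b)
    (h : D b x y z) (h' : D b' y x z) : x < y := by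
  have hD : D b' y b x := (d1 _ _ _ _ (d1 _ _ _ _ (D_of_D_of_D_swap d2 d3 h h')).2.2).1
  rcases conv b' y b x (hb'.trans hby) hb' hD with ⟨-, -, hyb, -⟩ | ⟨-, -, -, hxy⟩
  · exact absurd (lt_of_D_of_le conv hbx hby h) hyb.not_gt
  · exact hxy

end DRelation

theorem stmt6_general {X : Type*} [LinearOrder X] (D : X → X → X → X → Prop)
    (d1 : ∀ x y z w, D x y z w → D y x z w ∧ D x y w z ∧ D z w x y)
    (d2 : ∀ x y z w, D x y z w → ¬ D x z y w)
    (d3 : ∀ x y z w a, D x y z w → D a y z w ∨ D x y z a)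
    (conv : ∀ x y z w, x ≤ y → x ≤ z → D x y z w →
      (x < z ∧ x < w ∧ y < z ∧ y < w) ∨ (x < z ∧ x < w ∧ z < y ∧ w < y))
    (x y z : X) :
    (∀ a : X, ∃ b ≤ a, D b x y z) → ¬ (∀ a : X, ∃ b ≤ a, D b y x z) := by
  intro hxyz hyxz
  obtain ⟨b₁, hb₁, hD₁⟩ := hxyz (min x y)
  obtain ⟨b₂, hb₂, hD₂⟩ := hyxz b₁
  obtain ⟨b₃, hb₃, hD₃⟩ := hxyz b₂
  obtain ⟨hb₁x, hb₁y⟩ := le_min_iff.1 hb₁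
  have hxy : x < y := DRelation.lt_of_D_of_D_swap d1 d2 d3 conv hb₁x hb₁y hb₂ hD₁ hD₂
  have hyx : y < x :=
    DRelation.lt_of_D_of_D_swap d1 d2 d3 conv (hb₂.trans hb₁y) (hb₂.trans hb₁x) hb₃ hD₂ hD₃
  exact hxy.not_gt hyx

/-- For a D-relation with a convex total order, the derived relation
C(x;y,z) := (∀ a, ∃ b ≤ a, D(b,x;y,z)) satisfies axiom (c2): C(x;y,z) → ¬C(y;x,z). -/
theorem stmt6 {X : Type*} [LinearOrder X] (D : X → X → X → X → Prop)
    (d1 : ∀ x y z w, D x y z w → D y x z w ∧ D x y w z ∧ D z w x y)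
    (d2 : ∀ x y z w, D x y z w → ¬ D x z y w)
    (d3 : ∀ x y z w a, D x y z w → D a y z w ∨ D x y z a)
    (d4 : ∀ x y z, x ≠ z → y ≠ z → D x y z z)
    (conv : ∀ x y z w, x ≤ y → x ≤ z → D x y z w →
      (x < z ∧ x < w ∧ y < z ∧ y < w) ∨ (x < z ∧ x < w ∧ z < y ∧ w < y))
    (x y z : X) :
    (∀ a : X, ∃ b ≤ a, D b x y z) → ¬ (∀ a : X, ∃ b ≤ a, D b y x z) :=
  stmt6_general D d1 d2 d3 conv x y z
end

section
/- Let U be an ultrafilter on an index set κ, let (Gⁱ)_{i∈κ} be graphs and for each i and each g ∈ Gⁱ let H_gⁱ be a graph. Then the ultraproduct ∏_U (Gⁱ[H_gⁱ]) of the lexicographic sums is isomorphic to the lexicographic sum (∏_U Gⁱ)[(H_g)_{g}], where for g = [(gᵢ)]_U the fiber H_g is the ultraproduct ∏_U H_{gᵢ}ⁱ (which is well-defined, independent of the choice of representative (gᵢ) up to isomorphism). -/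
open Filter

universe u v

/-- The lexicographic sum G[(H_a)] of a family of graphs (H_a)_{a ∈ G} along a graph G:
the vertex set is the disjoint union Σ a, H a, and (a,b) ~ (a',b') iff a ~_G a'
(in particular a ≠ a') or a = a' and b ~_{H a} b'. -/
def lexSum {α : Type u} {β : α → Type v} (G : SimpleGraph α)
    (H : ∀ a : α, SimpleGraph (β a)) : SimpleGraph (Σ a, β a) where
  Adj x y := G.Adj x.1 y.1 ∨ ∃ h : y.1 = x.1, (H x.1).Adj x.2 (h ▸ y.2)
  symm := by
    refine ⟨?_⟩
    rintro ⟨a, b⟩ ⟨a', b'⟩ h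
    rcases h with h | ⟨h, h'⟩
    · exact Or.inl h.symm
    · dsimp only at h h' ⊢
      subst h
      exact Or.inr ⟨rfl, h'.symm⟩
  loopless := by
    refine ⟨?_⟩
    rintro ⟨a, b⟩ (h | ⟨h, h'⟩)
    · exact G.loopless.irrefl a h
    · rw [Subsingleton.elim h rfl] at h'
      exact (H a).loopless.irrefl b h'

/-- The ultraproduct of a family of graphs along an ultrafilter, with adjacency given
by Łoś's theorem. -/
def ultraGraph {κ : Type*} (U : Ultrafilter κ) (M : κ → Type u)
    (Gr : ∀ i, SimpleGraph (M i)) : SimpleGraph ((U : Filter κ).Product M) where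
  Adj x y :=
    Quotient.liftOn₂ x y (fun f g => ∀ᶠ i in U, (Gr i).Adj (f i) (g i))
      (by
        intro f₁ g₁ f₂ g₂ hf hg
        refine propext ⟨fun h => ?_, fun h => ?_⟩
        · filter_upwards [h, hf, hg] with i ha hf' hg'
          rw [← hf', ← hg']; exact ha
        · filter_upwards [h, hf, hg] with i ha hf' hg'
          rw [hf', hg']; exact ha)
  symm := by
    refine ⟨?_⟩
    intro x y
    refine Quotient.inductionOn₂ x y ?_
    intro f g h
    exact h.mono fun i hi => hi.symm
  loopless := by
    refine ⟨?_⟩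
    intro x
    refine Quotient.inductionOn x ?_
    intro f h
    obtain ⟨i, hi⟩ := h.exists
    exact (Gr i).loopless.irrefl (f i) hi

/-!
A vertex of `∏_U Gⁱ[Hⁱ]` is the class of a family `(gᵢ, hᵢ)`. Its base class `q = [(gᵢ)]` has
a representative `q.out` that agrees with `(gᵢ)` for `U`-most `i`, so `(hᵢ)` can be transported
to the fibres over `q.out`; this gives a bijection with the lexicographic sum of ultraproducts.
For adjacency, if two base classes differ then, `U` being an ultrafilter, their representatives
differ for `U`-most `i`, where adjacency in `Gⁱ[Hⁱ]` is adjacency in `Gⁱ`; if they coincide,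
adjacency is that of the fibres.
-/

section LexSum

variable {α : Type u} {β : α → Type v} (G : SimpleGraph α) (H : ∀ a, SimpleGraph (β a))

theorem lexSum_adj_mk_mk_self {a : α} {b b' : β a} :
    (lexSum G H).Adj ⟨a, b⟩ ⟨a, b'⟩ ↔ (H a).Adj b b' :=
  ⟨fun h => h.elim (fun h => absurd h (G.irrefl)) fun ⟨_, h⟩ => h, fun h => Or.inr ⟨rfl, h⟩⟩

theorem lexSum_adj_of_fst_ne {x y : Σ a, β a} (hxy : x.1 ≠ y.1) :
    (lexSum G H).Adj x y ↔ G.Adj x.1 y.1 :=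
  ⟨fun h => h.resolve_right fun ⟨e, _⟩ => hxy e.symm, Or.inl⟩

end LexSum

namespace Filter.Product

variable {κ : Type*} {l : Filter κ}

theorem eventually_out_eq_iff {M : κ → Type*} {x y : l.Product M} :
    (∀ᶠ i in l, x.out i = y.out i) ↔ x = y :=
  Quotient.out_equiv_out (s := productSetoid l M)

theorem eventually_out_ne {U : Ultrafilter κ} {M : κ → Type*} {x y : (U : Filter κ).Product M}
    (h : x ≠ y) : ∀ᶠ i in U, x.out i ≠ y.out i :=
  Ultrafilter.eventually_not.mpr (mt eventually_out_eq_iff.mp h)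

variable (l) {G : κ → Type u} (H : ∀ i, G i → Type v)

noncomputable def sigmaMk :
    (Σ q : l.Product G, l.Product fun i => H i (q.out i)) → l.Product fun i => Σ g, H i g :=
  fun x => Quotient.liftOn x.2 (fun h => ((fun i => ⟨x.1.out i, h i⟩ : ∀ i, Σ g, H i g) : _))
    fun _ _ e => Quotient.sound (e.mono fun i hi => by dsimp only; rw [hi])

theorem sigmaMk_injective : Function.Injective (sigmaMk l H) := by
  rintro ⟨q, y⟩ ⟨q', y'⟩
  induction y, y' using Quotient.inductionOn₂ with
  | h h h' =>
    intro hmk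
    have E : ∀ᶠ i in l, (⟨q.out i, h i⟩ : Σ g, H i g) = ⟨q'.out i, h' i⟩ := Quotient.exact hmk
    obtain rfl : q = q' := eventually_out_eq_iff.mp (E.mono fun i hi => congrArg Sigma.fst hi)
    exact Sigma.ext rfl <| heq_of_eq <| Quotient.sound <|
      E.mono fun i hi => eq_of_heq (Sigma.mk.inj_iff.mp hi).2

theorem sigmaMk_surjective [∀ i g, Nonempty (H i g)] : Function.Surjective (sigmaMk l H) := by
  classical
  intro x
  induction x using Quotient.inductionOn with
  | h f =>
    let q : l.Product G := ((fun i => (f i).1 : ∀ i, G i) : _)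
    have hq : ∀ᶠ i in l, q.out i = (f i).1 := Quotient.mk_out (s := productSetoid l G) _
    -- off the `l`-large set where `q.out` agrees with the base points of `f`, any fibre point will do
    refine ⟨⟨q, ((fun i => if e : (f i).1 = q.out i then cast (congrArg (H i) e) (f i).2
      else Classical.arbitrary _ : ∀ i, H i (q.out i)) : _)⟩, Quotient.sound ?_⟩
    filter_upwards [hq] with i e
    rw [dif_pos e.symm]
    exact Sigma.ext e (cast_heq _ _)

noncomputable def sigmaMkEquiv [∀ i g, Nonempty (H i g)] :
    (Σ q : l.Product G, l.Product fun i => H i (q.out i)) ≃ l.Product fun i => Σ g, H i g :=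
  Equiv.ofBijective (sigmaMk l H) ⟨sigmaMk_injective l H, sigmaMk_surjective l H⟩

end Filter.Product

section Ultraproduct

variable {κ : Type*} (U : Ultrafilter κ)

theorem ultraGraph_adj_mk {M : κ → Type u} (Gr : ∀ i, SimpleGraph (M i)) (f g : ∀ i, M i) :
    (ultraGraph U M Gr).Adj (f : (U : Filter κ).Product M) g ↔
      ∀ᶠ i in U, (Gr i).Adj (f i) (g i) :=
  Iff.rfl

theorem ultraGraph_adj_iff_out {M : κ → Type u} (Gr : ∀ i, SimpleGraph (M i))
    (x y : (U : Filter κ).Product M) :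
    (ultraGraph U M Gr).Adj x y ↔ ∀ᶠ i in U, (Gr i).Adj (x.out i) (y.out i) := by
  conv_lhs => rw [← x.out_eq, ← y.out_eq]
  rfl

theorem ultraGraph_lexSum_adj_sigmaMk {G : κ → Type u} (Gg : ∀ i, SimpleGraph (G i))
    {H : ∀ i, G i → Type u} (Hg : ∀ i g, SimpleGraph (H i g))
    (x y : Σ q : (U : Filter κ).Product G, (U : Filter κ).Product fun i => H i (q.out i)) :
    (ultraGraph U _ fun i => lexSum (Gg i) (Hg i)).Adj
        (Filter.Product.sigmaMk _ H x) (Filter.Product.sigmaMk _ H y) ↔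
      (lexSum (ultraGraph U G Gg) fun q => ultraGraph U _ fun i => Hg i (q.out i)).Adj x y := by
  obtain ⟨q, x⟩ := x
  obtain ⟨q', y⟩ := y
  induction x, y using Quotient.inductionOn₂ with
  | h f f' =>
    refine (ultraGraph_adj_mk U _ _ _).trans ?_
    by_cases hq : q = q'
    · subst hq
      simp only [lexSum_adj_mk_mk_self]
      exact Iff.symm <| lexSum_adj_mk_mk_self _ _
    · rw [lexSum_adj_of_fst_ne _ _ hq, ultraGraph_adj_iff_out]
      refine eventually_congr ?_
      filter_upwards [Filter.Product.eventually_out_ne hq] with i hi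
      exact lexSum_adj_of_fst_ne _ _ hi

end Ultraproduct

theorem stmt18_general {κ : Type*} (U : Ultrafilter κ)
    (G : κ → Type u)
    (Gg : ∀ i, SimpleGraph (G i))
    (H : ∀ i, G i → Type u) [∀ i g, Nonempty (H i g)]
    (Hg : ∀ i (g : G i), SimpleGraph (H i g)) :
    Nonempty
      ((ultraGraph U (fun i => Σ g : G i, H i g) (fun i => lexSum (Gg i) (Hg i))) ≃g
        (lexSum (ultraGraph U G Gg)
          (fun q : (U : Filter κ).Product G =>
            ultraGraph U (fun i => H i (q.out i)) (fun i => Hg i (q.out i))))) :=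
  ⟨(RelIso.mk (Filter.Product.sigmaMkEquiv _ H)
    (ultraGraph_lexSum_adj_sigmaMk U Gg Hg _ _)).symm⟩

/-- An ultraproduct of lexicographic sums of graphs is isomorphic to the
lexicographic sum, over the ultraproduct of the base graphs, of the ultraproducts of
the fibers (fibers computed at a chosen representative of each base class, which is
well defined up to isomorphism). -/
theorem stmt18 {κ : Type*} (U : Ultrafilter κ)
    (G : κ → Type u) [∀ i, Nonempty (G i)]
    (Gg : ∀ i, SimpleGraph (G i))
    (H : ∀ i, G i → Type u) [∀ i g, Nonempty (H i g)]
    (Hg : ∀ i (g : G i), SimpleGraph (H i g)) :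
    Nonempty
      ((ultraGraph U (fun i => Σ g : G i, H i g) (fun i => lexSum (Gg i) (Hg i))) ≃g
        (lexSum (ultraGraph U G Gg)
          (fun q : (U : Filter κ).Product G =>
            ultraGraph U (fun i => H i (q.out i)) (fun i => Hg i (q.out i))))) :=
  stmt18_general U G Gg H Hg
end
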